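/- Let G be a locally compact, second countable, Hausdorff topological group, let L₀ ∈ 𝒞(G) be uniformly separated, and let L ∈ Ξ_{L₀}. Let 𝒢_{L₀} := {(g, L') ∈ G × 𝒞(G) : L' ∈ Ξ_{L₀} and g ∈ L'} with the subspace topology from G × 𝒞(G), and for continuous compactly supported f : 𝒢_{L₀} → ℂ let π_L(f) be the bounded operator on ℓ²(L) given by (π_L(f)φ)(g') := Σ_{g ∈ L} f(g'g⁻¹, g·L) φ(g). For continuous compactly supported f₁, f₂ : 𝒢_{L₀} → ℂ, define their convolution by (f₁ ∗ f₂)(g, L') := Σ_{g' ∈ L'} f₁(g g'⁻¹, g'·L') f₂(g', L') for (g, L') ∈ 𝒢_{L₀} (a finite sum), and the involution by f*(g, L') := conj(f(g⁻¹, g·L')). Then π_L(f₁ ∗ f₂) = π_L(f₁) ∘ π_L(f₂), and π_L(f*) equals the Hilbert-space adjoint of π_L(f) on ℓ²(L). -/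

import Mathlib

open Set Topology Filter

/-- The space of closed subsets of a topological space `X`. -/
structure ClosedSubsets (X : Type*) [TopologicalSpace X] where
  carrier : Set X
  isClosed' : IsClosed carrier

namespace ClosedSubsets

variable {X : Type*} [TopologicalSpace X]

/-- The Fell topology on the space of closed subsets. -/
instance : TopologicalSpace (ClosedSubsets X) :=
  TopologicalSpace.generateFrom
    {U | ∃ (K : Set X) (𝓕 : Set (Set X)), IsCompact K ∧ 𝓕.Finite ∧
      (∀ F ∈ 𝓕, IsOpen F ∧ F.Nonempty) ∧
      U = {Y : ClosedSubsets X | Y.carrier ∩ K = ∅ ∧ ∀ F ∈ 𝓕, (Y.carrier ∩ F).Nonempty}}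

end ClosedSubsets

variable {G : Type*} [Group G] [TopologicalSpace G] [IsTopologicalGroup G]

/-- The right action `g • C = C g⁻¹` of a topological group on its closed subsets. -/
def ClosedSubsets.smul (g : G) (C : ClosedSubsets G) : ClosedSubsets G :=
  ⟨(fun x => x * g⁻¹) '' C.carrier, by
    simpa using (Homeomorph.mulRight g⁻¹).isClosedMap _ C.isClosed'⟩

/-- A closed set `L` is `S`-separated if `|L ∩ g·S| ≤ 1` for all `g`. -/
def SSeparated (S L : Set G) : Prop :=
  ∀ g : G, (L ∩ (fun x => x * g⁻¹) '' S).Subsingleton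

/-- A closed set is uniformly separated if it is `U`-separated for some nonempty open `U`. -/
def UniformlySeparated (L : Set G) : Prop :=
  ∃ U : Set G, IsOpen U ∧ U.Nonempty ∧ SSeparated U L

/-- The hull of `L`: the closure of its orbit in the Fell topology. -/
def hull (L : ClosedSubsets G) : Set (ClosedSubsets G) :=
  closure {C | ∃ g : G, C = ClosedSubsets.smul g L}

/-- The standard transversal of `L`. -/
def transversal (L : ClosedSubsets G) : Set (ClosedSubsets G) :=
  {L' | L' ∈ hull L ∧ (1 : G) ∈ L'.carrier}

/-- The groupoid `𝒢_{L₀}` canonically associated to a pattern `L₀`, as a topological space: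
tuples `(g, L')` with `L' ∈ Ξ_{L₀}` and `g ∈ L'`, topologized as a subspace of `G × 𝒞(G)`
(Fell topology on the second factor). -/
abbrev PatternGroupoid (L₀ : ClosedSubsets G) : Type _ :=
  {p : G × ClosedSubsets G // p.2 ∈ transversal L₀ ∧ p.1 ∈ p.2.carrier}

/-- The convolution product `(f₁ ∗ f₂)(g, L') = Σ_{g' ∈ L'} f₁(g g'⁻¹, g'·L') f₂(g', L')` on
functions on the groupoid `𝒢_{L₀}`.  The hypothesis `hmem` records the (true) invariance fact
`g'·L' ∈ Ξ_{L₀}` needed to write down the arguments of `f₁`. -/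
noncomputable def groupoidConv (L₀ : ClosedSubsets G)
    (hmem : ∀ L' ∈ transversal L₀, ∀ g ∈ L'.carrier,
      ClosedSubsets.smul g L' ∈ transversal L₀)
    (f₁ f₂ : PatternGroupoid L₀ → ℂ) : PatternGroupoid L₀ → ℂ := fun p =>
  ∑' g' : ↥p.1.2.carrier,
    f₁ ⟨(p.1.1 * (g'.1)⁻¹, ClosedSubsets.smul g'.1 p.1.2),
        hmem p.1.2 p.2.1 g'.1 g'.2, ⟨p.1.1, p.2.2, rfl⟩⟩ *
    f₂ ⟨(g'.1, p.1.2), p.2.1, g'.2⟩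

/-- The involution `f*(g, L') = conj (f(g⁻¹, g·L'))` on functions on the groupoid `𝒢_{L₀}`. -/
def groupoidInvol (L₀ : ClosedSubsets G)
    (hmem : ∀ L' ∈ transversal L₀, ∀ g ∈ L'.carrier,
      ClosedSubsets.smul g L' ∈ transversal L₀)
    (f : PatternGroupoid L₀ → ℂ) : PatternGroupoid L₀ → ℂ := fun p =>
  starRingEnd ℂ
    (f ⟨((p.1.1)⁻¹, ClosedSubsets.smul p.1.1 p.1.2),
      hmem p.1.2 p.2.1 p.1.1 p.2.2, ⟨1, p.2.1.2, one_mul _⟩⟩)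


/-! Both identities are checked entry by entry in the standard basis of `ℓ²(L)`, in which
`π_L(f)` has the matrix `(a, b) ↦ f(a b⁻¹, b·L)`: reindexing the convolution sum by
`g' = c b⁻¹` turns `f₁ ∗ f₂` into the matrix product, and `f*` into the conjugate transpose.

The substance is that `f₁ ∗ f₂` and `f*` are again continuous with compact support, so that the
defining formula of `π_L` applies to them. For `f₁ ∗ f₂` this rests on uniform separation:
near `(g, L')` only the finitely many points of `L'` in a fixed compact set contribute to the
sum, and each of them moves continuously with `L'` in the Fell topology. -/

namespace ClosedSubsets

section Fell

variable {X : Type*} [TopologicalSpace X]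

theorem ext {C D : ClosedSubsets X} (h : C.carrier = D.carrier) : C = D := by
  cases C; cases D; simpa using h

theorem isOpen_setOf_inter_eq_empty {K : Set X} (hK : IsCompact K) :
    IsOpen {Y : ClosedSubsets X | Y.carrier ∩ K = ∅} :=
  TopologicalSpace.isOpen_generateFrom_of_mem ⟨K, ∅, hK, finite_empty, by simp, by simp⟩

theorem isOpen_setOf_inter_nonempty {V : Set X} (hV : IsOpen V) :
    IsOpen {Y : ClosedSubsets X | (Y.carrier ∩ V).Nonempty} := by
  rcases V.eq_empty_or_nonempty with rfl | hne
  · simp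
  · exact TopologicalSpace.isOpen_generateFrom_of_mem
      ⟨∅, {V}, isCompact_empty, finite_singleton V, by simpa using ⟨hV, hne⟩, by simp⟩

theorem eventually_inter_eq_empty {C : ClosedSubsets X} {K : Set X} (hK : IsCompact K)
    (h : C.carrier ∩ K = ∅) : ∀ᶠ D in 𝓝 C, D.carrier ∩ K = ∅ :=
  (isOpen_setOf_inter_eq_empty hK).mem_nhds h

theorem eventually_inter_nonempty {C : ClosedSubsets X} {V : Set X} (hV : IsOpen V)
    (h : (C.carrier ∩ V).Nonempty) : ∀ᶠ D in 𝓝 C, (D.carrier ∩ V).Nonempty :=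
  (isOpen_setOf_inter_nonempty hV).mem_nhds h

variable [LocallyCompactSpace X]

theorem exists_isCompact_inter_eq_empty {D : ClosedSubsets X} {x : X} (hx : x ∉ D.carrier) :
    ∃ K, IsCompact K ∧ x ∈ interior K ∧ D.carrier ∩ K = ∅ := by
  obtain ⟨K, hK, hxK, hKD⟩ := exists_compact_subset D.isClosed'.isOpen_compl hx
  exact ⟨K, hK, hxK, eq_empty_of_forall_notMem fun y hy => hKD hy.2 hy.1⟩

instance : T2Space (ClosedSubsets X) := by
  have key : ∀ C D : ClosedSubsets X, ¬ C.carrier ⊆ D.carrier →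
      ∃ u v : Set (ClosedSubsets X), IsOpen u ∧ IsOpen v ∧ C ∈ u ∧ D ∈ v ∧ Disjoint u v := by
    intro C D hCD
    obtain ⟨x, hxC, hxD⟩ := not_subset.mp hCD
    obtain ⟨K, hK, hxK, hDK⟩ := exists_isCompact_inter_eq_empty hxD
    refine ⟨_, _, isOpen_setOf_inter_nonempty isOpen_interior, isOpen_setOf_inter_eq_empty hK,
      ⟨x, hxC, hxK⟩, hDK, disjoint_left.mpr ?_⟩
    rintro Y ⟨y, hyY, hyK⟩ hY
    exact (eq_empty_iff_forall_notMem.mp hY) y ⟨hyY, interior_subset hyK⟩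
  refine ⟨fun C D hne => ?_⟩
  by_cases hCD : C.carrier ⊆ D.carrier
  · obtain ⟨u, v, hu, hv, hDu, hCv, huv⟩ :=
      key D C fun hDC => hne (ext (hCD.antisymm hDC))
    exact ⟨v, u, hv, hu, hCv, hDu, huv.symm⟩
  · exact key C D hCD

theorem isClosed_setOf_mem : IsClosed {p : X × ClosedSubsets X | p.1 ∈ p.2.carrier} := by
  refine isOpen_compl_iff.mp (isOpen_iff_mem_nhds.mpr ?_)
  rintro ⟨x, C⟩ (hx : x ∉ C.carrier)
  obtain ⟨K, hK, hxK, hCK⟩ := exists_isCompact_inter_eq_empty hx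
  filter_upwards [prod_mem_nhds (isOpen_interior.mem_nhds hxK)
    (eventually_inter_eq_empty hK hCK)]
  rintro ⟨y, D⟩ ⟨hyK, hDK⟩ (hyD : y ∈ D.carrier)
  exact (eq_empty_iff_forall_notMem.mp hDK) y ⟨hyD, interior_subset hyK⟩

end Fell

section Action

open scoped Pointwise

theorem mem_smul_iff {x g : G} {C : ClosedSubsets G} :
    x ∈ (smul g C).carrier ↔ x * g ∈ C.carrier := by
  constructor
  · rintro ⟨c, hc, rfl⟩
    simpa using hc
  · exact fun h => ⟨x * g, h, by simp⟩

theorem smul_smul (h g : G) (C : ClosedSubsets G) : smul h (smul g C) = smul (h * g) C :=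
  ext <| Set.ext fun x => by simp only [mem_smul_iff, mul_assoc]

theorem one_smul (C : ClosedSubsets G) : smul 1 C = C :=
  ext <| Set.ext fun x => by simp only [mem_smul_iff, mul_one]

def smulEquiv (g : G) (C : ClosedSubsets G) : C.carrier ≃ (smul g C).carrier where
  toFun x := ⟨x.1 * g⁻¹, x.1, x.2, rfl⟩
  invFun y := ⟨y.1 * g, mem_smul_iff.mp y.2⟩
  left_inv x := Subtype.ext (inv_mul_cancel_right x.1 g)
  right_inv y := Subtype.ext (mul_inv_cancel_right y.1 g)

theorem smul_inter_eq_empty_iff {g : G} {C : ClosedSubsets G} {K : Set G} :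
    (smul g C).carrier ∩ K = ∅ ↔ C.carrier ∩ (· * g) '' K = ∅ := by
  simp only [eq_empty_iff_forall_notMem, mem_inter_iff, not_and, mem_smul_iff]
  constructor
  · rintro h _ hx ⟨k, hk, rfl⟩
    exact h k hx hk
  · exact fun h x hx hxK => h _ hx ⟨x, hxK, rfl⟩

theorem eventually_smul_inter_nonempty {g₀ : G} {C₀ : ClosedSubsets G} {V : Set G}
    (hV : IsOpen V) (h : ((smul g₀ C₀).carrier ∩ V).Nonempty) :
    ∀ᶠ p : G × ClosedSubsets G in 𝓝 (g₀, C₀), ((smul p.1 p.2).carrier ∩ V).Nonempty := by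
  obtain ⟨x, hx, hxV⟩ := h
  have hopen : IsOpen ((fun q : G × G => q.1 * q.2⁻¹) ⁻¹' V) :=
    hV.preimage (continuous_fst.mul continuous_snd.inv)
  obtain ⟨A, B, hA, hB, hxA, hg₀B, hAB⟩ :=
    isOpen_prod_iff.mp hopen (x * g₀) g₀ (by simpa [mul_assoc] using hxV)
  filter_upwards [prod_mem_nhds (hB.mem_nhds hg₀B)
    (eventually_inter_nonempty hA ⟨x * g₀, mem_smul_iff.mp hx, hxA⟩)]
  rintro ⟨g, C⟩ ⟨hg, c, hc, hcA⟩
  exact ⟨c * g⁻¹, mem_smul_iff.mpr (by simpa using hc), hAB (mk_mem_prod hcA hg)⟩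

variable [LocallyCompactSpace G]

theorem eventually_smul_inter_eq_empty {g₀ : G} {C₀ : ClosedSubsets G} {K : Set G}
    (hK : IsCompact K) (h : (smul g₀ C₀).carrier ∩ K = ∅) :
    ∀ᶠ p : G × ClosedSubsets G in 𝓝 (g₀, C₀), (smul p.1 p.2).carrier ∩ K = ∅ := by
  have hKg₀ : K ×ˢ {g₀} ⊆ (fun q : G × G => q.1 * q.2) ⁻¹' C₀.carrierᶜ := by
    rintro ⟨k, g⟩ ⟨hk, rfl⟩ hkg
    exact (eq_empty_iff_forall_notMem.mp (smul_inter_eq_empty_iff.mp h)) _ ⟨hkg, k, hk, rfl⟩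
  obtain ⟨A, B, -, hB, hKA, hg₀B, hAB⟩ := generalized_tube_lemma hK isCompact_singleton
    (C₀.isClosed'.isOpen_compl.preimage continuous_mul) hKg₀
  obtain ⟨Q, hQ, hg₀Q, hQB⟩ := exists_compact_subset hB (hg₀B rfl)
  have hC₀KQ : C₀.carrier ∩ (K * Q) = ∅ := by
    refine eq_empty_of_forall_notMem ?_
    rintro _ ⟨hC₀, ⟨k, hk, q, hq, rfl⟩⟩
    exact hAB (mk_mem_prod (hKA hk) (hQB hq)) hC₀
  filter_upwards [prod_mem_nhds (isOpen_interior.mem_nhds hg₀Q)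
    (eventually_inter_eq_empty (hK.mul hQ) hC₀KQ)]
  rintro ⟨g, C⟩ ⟨hg, hC⟩
  refine smul_inter_eq_empty_iff.mpr (eq_empty_of_forall_notMem ?_)
  rintro _ ⟨hC', k, hk, rfl⟩
  exact (eq_empty_iff_forall_notMem.mp hC) _ ⟨hC', mul_mem_mul hk (interior_subset hg)⟩

theorem continuous_smul : Continuous fun p : G × ClosedSubsets G => smul p.1 p.2 := by
  refine continuous_generateFrom_iff.mpr ?_
  rintro _ ⟨K, 𝓕, hK, h𝓕, h𝓕open, rfl⟩
  refine isOpen_iff_mem_nhds.mpr ?_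
  rintro ⟨g₀, C₀⟩ ⟨hmiss, hhit⟩
  refine (eventually_smul_inter_eq_empty hK hmiss).and ?_
  exact (eventually_all_finite h𝓕).mpr fun F hF =>
    eventually_smul_inter_nonempty (h𝓕open F hF).1 (hhit F hF)

end Action

end ClosedSubsets

section LocallySubsingleton

variable {X Y M : Type*} [AddCommMonoid M] [TopologicalSpace M]

theorem tsum_subtype_eq_sum_of_subsingleton_inter {S : Set Y} {F : Finset Y} {V : Y → Set Y}
    {g : Y → M} {v : Y → Y} (hv : ∀ x ∈ F, v x ∈ S ∩ V x)
    (hsub : ∀ x ∈ F, (S ∩ V x).Subsingleton) (hdisj : (F : Set Y).PairwiseDisjoint V)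
    (hsupp : ∀ y ∈ S, g y ≠ 0 → ∃ x ∈ F, y ∈ V x) :
    ∑' y : S, g y = ∑ x ∈ F, g (v x) := by
  classical
  have hinj : Set.InjOn v F := fun x hx x' hx' hvx => by
    by_contra hne
    exact disjoint_left.mp (hdisj hx hx' hne) (hv x hx).2 (hvx ▸ (hv x' hx').2)
  rw [← Finset.sum_image hinj, tsum_subtype, tsum_eq_sum fun y hy => ?_]
  · exact Finset.sum_congr rfl fun y hy => by
      obtain ⟨x, hx, rfl⟩ := Finset.mem_image.mp hy
      exact indicator_of_mem (hv x hx).1 g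
  · refine indicator_apply_eq_zero.mpr fun hyS => ?_
    by_contra hgy
    obtain ⟨x, hx, hyV⟩ := hsupp y hyS hgy
    exact hy (Finset.mem_image.mpr ⟨x, hx, hsub x hx (hv x hx) ⟨hyS, hyV⟩⟩)

variable [TopologicalSpace X] [TopologicalSpace Y]

theorem IsCompact.finite_inter_of_locally_subsingleton {S K : Set Y} (hK : IsCompact K)
    (hS : ∀ y, ∃ T, IsOpen T ∧ y ∈ T ∧ (S ∩ T).Subsingleton) : (S ∩ K).Finite := by
  choose T hTopen hyT hST using hS
  obtain ⟨t, -, hKt⟩ := hK.elim_nhds_subcover T fun y _ => (hTopen y).mem_nhds (hyT y)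
  refine (t.finite_toSet.biUnion fun y _ => (hST y).finite).subset ?_
  rintro z ⟨hzS, hzK⟩
  obtain ⟨y, hy, hzT⟩ := mem_iUnion₂.mp (hKt hzK)
  exact mem_biUnion hy ⟨hzS, hzT⟩

theorem ClosedSubsets.exists_tendsto_mem_inter {Λ : X → ClosedSubsets Y} {p₀ : X}
    (hΛ : ContinuousAt Λ p₀) {V : Set Y} (hV : IsOpen V)
    (hsub : ∀ p, ((Λ p).carrier ∩ V).Subsingleton) {x : Y} (hx : x ∈ (Λ p₀).carrier ∩ V) :
    ∃ u : X → Y, (∀ᶠ p in 𝓝 p₀, u p ∈ (Λ p).carrier ∩ V) ∧ Tendsto u (𝓝 p₀) (𝓝 x) := by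
  classical
  set u : X → Y := fun p => if h : ((Λ p).carrier ∩ V).Nonempty then h.some else x
  have hu : ∀ p, ((Λ p).carrier ∩ V).Nonempty → u p ∈ (Λ p).carrier ∩ V := fun p h => by
    simp only [u, dif_pos h]
    exact h.some_mem
  refine ⟨u, (hΛ.eventually (ClosedSubsets.eventually_inter_nonempty hV ⟨x, hx⟩)).mono hu,
    tendsto_nhds.mpr fun W hW hxW => ?_⟩
  have hVW : ((Λ p₀).carrier ∩ (V ∩ W)).Nonempty := ⟨x, hx.1, hx.2, hxW⟩
  filter_upwards [hΛ.eventually (ClosedSubsets.eventually_inter_nonempty (hV.inter hW) hVW)]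
  rintro p ⟨y, hyΛ, hyV, hyW⟩
  show u p ∈ W
  rwa [hsub p (hu p ⟨y, hyΛ, hyV⟩) ⟨hyΛ, hyV⟩]

/-- Separate the finitely many points `x` of `Λ p₀ ∩ K` by disjoint open sets `V x`, each meeting
every `Λ p` at most once; for `p` near `p₀`, `Λ p` meets every `V x` and misses
`K \ ⋃ x, V x`. -/
theorem ClosedSubsets.exists_eventually_tsum_eq_sum [T2Space Y] {Λ : X → ClosedSubsets Y}
    {p₀ : X} (hΛ : ContinuousAt Λ p₀)
    (hsep : ∀ y, ∃ T, IsOpen T ∧ y ∈ T ∧ ∀ p, ((Λ p).carrier ∩ T).Subsingleton)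
    {φ : X × Y → M} {K : Set Y} (hK : IsCompact K) (hφK : ∀ p y, y ∉ K → φ (p, y) = 0) :
    ∃ (F : Finset Y) (u : Y → X → Y),
      (∀ x ∈ F, x ∈ (Λ p₀).carrier ∧ Tendsto (u x) (𝓝 p₀) (𝓝 x) ∧
        ∀ᶠ p in 𝓝 p₀, u x p ∈ (Λ p).carrier) ∧
      (∀ᶠ p in 𝓝 p₀, ∑' y : (Λ p).carrier, φ (p, y) = ∑ x ∈ F, φ (p, u x p)) ∧
      ∑' y : (Λ p₀).carrier, φ (p₀, y) = ∑ x ∈ F, φ (p₀, x) := by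
  choose T hTopen hyT hT using hsep
  have hfin : ((Λ p₀).carrier ∩ K).Finite :=
    hK.finite_inter_of_locally_subsingleton fun y => ⟨T y, hTopen y, hyT y, hT y p₀⟩
  set F := hfin.toFinset
  obtain ⟨W, hW, hWdisj⟩ := hfin.t2_separation
  set V : Y → Set Y := fun x => T x ∩ W x
  have hVopen : ∀ x, IsOpen (V x) := fun x => (hTopen x).inter (hW x).2
  have hVsub : ∀ p x, ((Λ p).carrier ∩ V x).Subsingleton :=
    fun p x => (hT x p).anti (inter_subset_inter_right _ inter_subset_left)
  have hVdisj : (F : Set Y).PairwiseDisjoint V := by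
    rw [hfin.coe_toFinset]
    exact hWdisj.mono fun x => inter_subset_right
  have hxV : ∀ x ∈ F, x ∈ (Λ p₀).carrier ∩ V x :=
    fun x hx => ⟨(hfin.mem_toFinset.mp hx).1, hyT x, (hW x).1⟩
  have hsel : ∀ x, ∃ u : X → Y, x ∈ F →
      (∀ᶠ p in 𝓝 p₀, u p ∈ (Λ p).carrier ∩ V x) ∧ Tendsto u (𝓝 p₀) (𝓝 x) := fun x => by
    by_cases hx : x ∈ F
    · obtain ⟨u, hu⟩ := exists_tendsto_mem_inter hΛ (hVopen x) (hVsub · x) (hxV x hx)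
      exact ⟨u, fun _ => hu⟩
    · exact ⟨fun _ => x, fun h => absurd h hx⟩
  choose u hu using hsel
  set K₀ := K \ ⋃ x ∈ F, V x
  have hK₀ : (Λ p₀).carrier ∩ K₀ = ∅ := by
    refine eq_empty_of_forall_notMem fun y ⟨hyΛ, hyK, hyV⟩ => hyV ?_
    have hyF : y ∈ F := hfin.mem_toFinset.mpr ⟨hyΛ, hyK⟩
    exact mem_biUnion hyF (hxV y hyF).2
  have hsum : ∀ p, (Λ p).carrier ∩ K₀ = ∅ → ∀ v : Y → Y,
      (∀ x ∈ F, v x ∈ (Λ p).carrier ∩ V x) →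
      ∑' y : (Λ p).carrier, φ (p, y) = ∑ x ∈ F, φ (p, v x) := by
    refine fun p hp v hv => tsum_subtype_eq_sum_of_subsingleton_inter
      (g := fun y => φ (p, y)) hv (fun x _ => hVsub p x) hVdisj fun y hyΛ hφy => ?_
    by_contra hyV
    have hyK₀ : y ∈ K₀ := ⟨not_imp_comm.mp (hφK p y) hφy, by simpa using hyV⟩
    exact (eq_empty_iff_forall_notMem.mp hp) y ⟨hyΛ, hyK₀⟩
  refine ⟨F, u, fun x hx => ⟨(hxV x hx).1, (hu x hx).2, (hu x hx).1.mono fun p hp => hp.1⟩,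
    ?_, hsum p₀ hK₀ id hxV⟩
  filter_upwards [hΛ.eventually (eventually_inter_eq_empty
    (hK.diff (isOpen_biUnion fun x _ => hVopen x)) hK₀),
    F.eventually_all.mpr fun x hx => (hu x hx).1] with p hp hup
  exact hsum p hp _ hup

theorem ClosedSubsets.continuous_tsum [T2Space Y] [ContinuousAdd M] {Λ : X → ClosedSubsets Y}
    (hΛ : Continuous Λ)
    (hsep : ∀ y, ∃ T, IsOpen T ∧ y ∈ T ∧ ∀ p, ((Λ p).carrier ∩ T).Subsingleton)
    {φ : X × Y → M} (hφ : ContinuousOn φ {q | q.2 ∈ (Λ q.1).carrier})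
    {K : Set Y} (hK : IsCompact K) (hφK : ∀ p y, y ∉ K → φ (p, y) = 0) :
    Continuous fun p => ∑' y : (Λ p).carrier, φ (p, y) := by
  refine continuous_iff_continuousAt.mpr fun p₀ => ?_
  obtain ⟨F, u, hu, hnear, hp₀⟩ :=
    exists_eventually_tsum_eq_sum hΛ.continuousAt hsep hK hφK
  rw [ContinuousAt, hp₀]
  refine Tendsto.congr' (EventuallyEq.symm hnear) (tendsto_finsetSum _ fun x hx => ?_)
  obtain ⟨hxΛ, hux, hu_mem⟩ := hu x hx
  exact (hφ (p₀, x) hxΛ).tendsto.comp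
    (tendsto_nhdsWithin_iff.mpr ⟨tendsto_id.prodMk_nhds hux, hu_mem⟩)

end LocallySubsingleton

section Separated

theorem SSeparated.smul {U : Set G} {C : ClosedSubsets G} (h : SSeparated U C.carrier) (g : G) :
    SSeparated U (ClosedSubsets.smul g C).carrier := by
  intro a x ⟨hxC, u, hu, hux⟩ y ⟨hyC, v, hv, hvy⟩
  refine mul_right_cancel (b := g) (h (g⁻¹ * a) ⟨ClosedSubsets.mem_smul_iff.mp hxC, u, hu, ?_⟩
    ⟨ClosedSubsets.mem_smul_iff.mp hyC, v, hv, ?_⟩)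
  · rw [← hux]; group
  · rw [← hvy]; group

/-- `T` is the translate of `U` through `x`. -/
theorem exists_isOpen_forall_sSeparated_subsingleton {U : Set G} (hU : IsOpen U)
    (hne : U.Nonempty) (x : G) :
    ∃ T, IsOpen T ∧ x ∈ T ∧ ∀ L, SSeparated U L → (L ∩ T).Subsingleton := by
  obtain ⟨u, hu⟩ := hne
  exact ⟨_, (Homeomorph.mulRight (x⁻¹ * u)⁻¹).isOpenMap _ hU, ⟨u, hu, by simp⟩,
    fun L hL => hL (x⁻¹ * u)⟩

variable [T2Space G]

theorem isClosed_setOf_sSeparated {U : Set G} (hU : IsOpen U) :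
    IsClosed {C : ClosedSubsets G | SSeparated U C.carrier} := by
  refine isOpen_compl_iff.mp (isOpen_iff_mem_nhds.mpr fun C hC => ?_)
  obtain ⟨a, x, hx, y, hy, hxy⟩ : ∃ a, (C.carrier ∩ (· * a⁻¹) '' U).Nontrivial := by
    simpa [SSeparated, not_subsingleton_iff] using hC
  obtain ⟨Wx, Wy, hWx, hWy, hxW, hyW, hW⟩ := t2_separation hxy
  have hUa : IsOpen ((· * a⁻¹) '' U) := (Homeomorph.mulRight a⁻¹).isOpenMap _ hU
  filter_upwards [ClosedSubsets.eventually_inter_nonempty (hWx.inter hUa) ⟨x, hx.1, hxW, hx.2⟩,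
    ClosedSubsets.eventually_inter_nonempty (hWy.inter hUa) ⟨y, hy.1, hyW, hy.2⟩]
  rintro D ⟨x', hx'D, hx'W, hx'U⟩ ⟨y', hy'D, hy'W, hy'U⟩ hD
  exact disjoint_left.mp hW hx'W ((hD a ⟨hx'D, hx'U⟩ ⟨hy'D, hy'U⟩) ▸ hy'W)

theorem SSeparated.of_mem_hull {U : Set G} (hU : IsOpen U) {L₀ C : ClosedSubsets G}
    (h : SSeparated U L₀.carrier) (hC : C ∈ hull L₀) : SSeparated U C.carrier :=
  closure_minimal (by rintro _ ⟨g, rfl⟩; exact h.smul g) (isClosed_setOf_sSeparated hU) hC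

end Separated

section PatternGroupoid

variable {L₀ : ClosedSubsets G}

theorem PatternGroupoid.continuous_fst : Continuous fun p : PatternGroupoid L₀ => p.1.1 :=
  continuous_subtype_val.fst

theorem PatternGroupoid.continuous_snd : Continuous fun p : PatternGroupoid L₀ => p.1.2 :=
  continuous_subtype_val.snd

variable [LocallyCompactSpace G]

theorem isClosed_transversal (L₀ : ClosedSubsets G) : IsClosed (transversal L₀) :=
  isClosed_closure.inter
    (ClosedSubsets.isClosed_setOf_mem.preimage (continuous_const.prodMk continuous_id))

theorem isClosed_setOf_patternGroupoid (L₀ : ClosedSubsets G) :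
    IsClosed {p : G × ClosedSubsets G | p.2 ∈ transversal L₀ ∧ p.1 ∈ p.2.carrier} :=
  ((isClosed_transversal L₀).preimage continuous_snd).inter ClosedSubsets.isClosed_setOf_mem

theorem PatternGroupoid.hasCompactSupport [T2Space G] {M : Type*} [Zero M]
    {f : PatternGroupoid L₀ → M} {K : Set G} {C : Set (ClosedSubsets G)} (hK : IsCompact K)
    (hC : IsCompact C) (hf : ∀ p, f p ≠ 0 → p.1.1 ∈ K ∧ p.1.2 ∈ C) : HasCompactSupport f :=
  .intro ((isClosed_setOf_patternGroupoid L₀).isClosedEmbedding_subtypeVal.isCompact_preimage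
    (hK.prod hC)) fun p hp => not_imp_comm.mp (hf p) hp

variable
  (hmem : ∀ L' ∈ transversal L₀, ∀ g ∈ L'.carrier, ClosedSubsets.smul g L' ∈ transversal L₀)

def PatternGroupoid.inv (p : PatternGroupoid L₀) : PatternGroupoid L₀ :=
  ⟨((p.1.1)⁻¹, ClosedSubsets.smul p.1.1 p.1.2),
    hmem p.1.2 p.2.1 p.1.1 p.2.2, ⟨1, p.2.1.2, one_mul _⟩⟩

def PatternGroupoid.invHomeomorph : PatternGroupoid L₀ ≃ₜ PatternGroupoid L₀ :=
  have hinv : Function.Involutive (inv hmem) := fun p => Subtype.ext <| Prod.ext (inv_inv _) <| by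
    simp only [inv, ClosedSubsets.smul_smul, inv_mul_cancel, ClosedSubsets.one_smul]
  have hcont : Continuous (inv hmem) :=
    continuous_fst.inv.prodMk (ClosedSubsets.continuous_smul.comp
      (continuous_fst.prodMk continuous_snd)) |>.subtype_mk _
  { toEquiv := hinv.toPerm, continuous_toFun := hcont, continuous_invFun := hcont }

theorem groupoidInvol_eq (f : PatternGroupoid L₀ → ℂ) :
    groupoidInvol L₀ hmem f = starRingEnd ℂ ∘ f ∘ PatternGroupoid.invHomeomorph hmem :=
  rfl

theorem continuous_groupoidInvol {f : PatternGroupoid L₀ → ℂ} (hf : Continuous f) :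
    Continuous (groupoidInvol L₀ hmem f) :=
  groupoidInvol_eq hmem f ▸
    Complex.continuous_conj.comp (hf.comp (PatternGroupoid.invHomeomorph hmem).continuous)

theorem HasCompactSupport.groupoidInvol {f : PatternGroupoid L₀ → ℂ} (hf : HasCompactSupport f) :
    HasCompactSupport (groupoidInvol L₀ hmem f) :=
  groupoidInvol_eq hmem f ▸ (hf.comp_homeomorph _).comp_left (map_zero _)

end PatternGroupoid

section Convolution

variable [LocallyCompactSpace G] [T2Space G] {L₀ : ClosedSubsets G}
  (hmem : ∀ L' ∈ transversal L₀, ∀ g ∈ L'.carrier, ClosedSubsets.smul g L' ∈ transversal L₀)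
  {f₁ f₂ : PatternGroupoid L₀ → ℂ}

theorem continuous_groupoidConv (hsep : UniformlySeparated L₀.carrier) (h₁ : Continuous f₁)
    (h₂ : Continuous f₂) (h₂s : HasCompactSupport f₂) :
    Continuous (groupoidConv L₀ hmem f₁ f₂) := by
  classical
  obtain ⟨U, hU, hUne, hUsep⟩ := hsep
  set Z := {q : PatternGroupoid L₀ × G | q.2 ∈ q.1.1.2.carrier}
  -- the summand of `f₁ ∗ f₂` at `p` and `y ∈ L'`, extended by `0` to `y ∉ L'`
  set φ : PatternGroupoid L₀ × G → ℂ := fun q => if h : q.2 ∈ q.1.1.2.carrier then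
    f₁ ⟨(q.1.1.1 * q.2⁻¹, ClosedSubsets.smul q.2 q.1.1.2), hmem _ q.1.2.1 _ h,
      ⟨q.1.1.1, q.1.2.2, rfl⟩⟩ * f₂ ⟨(q.2, q.1.1.2), q.1.2.1, h⟩ else 0
  have hφ : Z.domRestrict φ = fun q : Z =>
      f₁ ⟨(q.1.1.1.1 * q.1.2⁻¹, ClosedSubsets.smul q.1.2 q.1.1.1.2), hmem _ q.1.1.2.1 _ q.2,
        ⟨q.1.1.1.1, q.1.1.2.2, rfl⟩⟩ * f₂ ⟨(q.1.2, q.1.1.1.2), q.1.1.2.1, q.2⟩ :=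
    funext fun q => dif_pos q.2
  have hp : Continuous fun q : Z => q.1.1 := continuous_subtype_val.fst
  have hy : Continuous fun q : Z => q.1.2 := continuous_subtype_val.snd
  have hL' : Continuous fun q : Z => q.1.1.1.2 := PatternGroupoid.continuous_snd.comp hp
  have hconv : groupoidConv L₀ hmem f₁ f₂ = fun p => ∑' y : p.1.2.carrier, φ (p, y) :=
    funext fun p => tsum_congr fun y => by simp only [φ, dif_pos y.2]
  rw [hconv]
  refine ClosedSubsets.continuous_tsum PatternGroupoid.continuous_snd (fun y => ?_) ?_
    (h₂s.image PatternGroupoid.continuous_fst) fun p y hy => ?_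
  · obtain ⟨T, hT, hyT, hTsub⟩ := exists_isOpen_forall_sSeparated_subsingleton hU hUne y
    exact ⟨T, hT, hyT, fun p => hTsub _ (hUsep.of_mem_hull hU p.2.1.1)⟩
  · rw [continuousOn_iff_continuous_domRestrict, hφ]
    refine (h₁.comp ?_).mul (h₂.comp ?_)
    · exact ((PatternGroupoid.continuous_fst.comp hp).mul hy.inv).prodMk
        (ClosedSubsets.continuous_smul.comp (hy.prodMk hL')) |>.subtype_mk _
    · exact (hy.prodMk hL').subtype_mk _
  · simp only [φ]
    split_ifs with h
    · rw [image_eq_zero_of_notMem_tsupport fun hts => hy ⟨_, hts, rfl⟩, mul_zero]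
    · rfl

theorem HasCompactSupport.groupoidConv (h₁s : HasCompactSupport f₁)
    (h₂s : HasCompactSupport f₂) :
    HasCompactSupport (groupoidConv L₀ hmem f₁ f₂) := by
  refine PatternGroupoid.hasCompactSupport
    ((h₁s.image PatternGroupoid.continuous_fst).mul (h₂s.image PatternGroupoid.continuous_fst))
    (h₂s.image PatternGroupoid.continuous_snd) fun p hp => ?_
  obtain ⟨y, hy⟩ : ∃ y : p.1.2.carrier,
      f₁ ⟨(p.1.1 * y.1⁻¹, ClosedSubsets.smul y.1 p.1.2), hmem p.1.2 p.2.1 y.1 y.2,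
        ⟨p.1.1, p.2.2, rfl⟩⟩ * f₂ ⟨(y.1, p.1.2), p.2.1, y.2⟩ ≠ 0 := by
    by_contra! h
    exact hp (tsum_congr h |>.trans tsum_zero)
  have h₁ := subset_tsupport _ (left_ne_zero_of_mul hy)
  have h₂ := subset_tsupport _ (right_ne_zero_of_mul hy)
  exact ⟨⟨_, ⟨_, h₁, rfl⟩, _, ⟨_, h₂, rfl⟩, inv_mul_cancel_right p.1.1 y.1⟩, _, h₂, rfl⟩

end Convolution

section KernelOperators

open scoped lp ComplexConjugate

variable {ι κ 𝕜 : Type*} [DecidableEq ι]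

theorem lp.ext_continuousLinearMap_single [NormedField 𝕜] {E : ι → Type*}
    [∀ i, NormedAddCommGroup (E i)] [∀ i, NormedSpace 𝕜 (E i)] {p : ENNReal} [Fact (1 ≤ p)]
    (hp : p ≠ ⊤) {F : Type*}
    [AddCommMonoid F] [Module 𝕜 F] [TopologicalSpace F] [T2Space F] {A B : lp E p →L[𝕜] F}
    (h : ∀ i x, A (lp.single p i x) = B (lp.single p i x)) : A = B :=
  ContinuousLinearMap.ext fun f => ((lp.hasSum_single hp f).map A A.continuous).unique <| by
    simpa only [Function.comp_def, h] using (lp.hasSum_single hp f).map B B.continuous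

theorem apply_single_of_forall_apply_eq_tsum [NormedField 𝕜] {T : ℓ²(ι, 𝕜) →L[𝕜] ℓ²(κ, 𝕜)}
    {k : κ → ι → 𝕜} (hT : ∀ φ a, T φ a = ∑' b, k a b * φ b) (a : κ) (b : ι) (x : 𝕜) :
    T (lp.single 2 b x) a = k a b * x := by
  rw [hT, tsum_eq_single b fun c hc => by simp [lp.single_apply, Pi.single_eq_of_ne hc]]
  simp [lp.single_apply]

theorem adjoint_single_apply [RCLike 𝕜] [DecidableEq κ] (T : ℓ²(ι, 𝕜) →L[𝕜] ℓ²(κ, 𝕜))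
    (i : ι) (j : κ) (x : 𝕜) :
    T.adjoint (lp.single 2 j x) i = conj (T (lp.single 2 i 1) j) * x := by
  calc T.adjoint (lp.single 2 j x) i
      = inner 𝕜 (lp.single 2 i (1 : 𝕜)) (T.adjoint (lp.single 2 j x)) := by
        simp [lp.inner_single_left]
    _ = inner 𝕜 (T (lp.single 2 i 1)) (lp.single 2 j x) := T.adjoint_inner_right _ _
    _ = conj (T (lp.single 2 i 1) j) * x := by
        rw [lp.inner_single_right, RCLike.inner_apply, mul_comm]

end KernelOperators

section RegularRepresentation

variable {L₀ L : ClosedSubsets G}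
  (hmem : ∀ L' ∈ transversal L₀, ∀ g ∈ L'.carrier, ClosedSubsets.smul g L' ∈ transversal L₀)
  (hL : L ∈ transversal L₀)

/-- The matrix of `π_L(f)` in the standard basis of `ℓ²(L)`. -/
def regularKernel (f : PatternGroupoid L₀ → ℂ) (a b : L.carrier) : ℂ :=
  f ⟨(a.1 * b.1⁻¹, ClosedSubsets.smul b.1 L), hmem L hL b.1 b.2, ⟨a.1, a.2, rfl⟩⟩

theorem regularKernel_groupoidConv (f₁ f₂ : PatternGroupoid L₀ → ℂ) (a b : L.carrier) :
    regularKernel hmem hL (groupoidConv L₀ hmem f₁ f₂) a b =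
      ∑' c, regularKernel hmem hL f₁ a c * regularKernel hmem hL f₂ c b := by
  rw [regularKernel, groupoidConv, ← (ClosedSubsets.smulEquiv b.1 L).tsum_eq]
  refine tsum_congr fun c => congrArg₂ (· * ·) (congrArg f₁ (Subtype.ext (Prod.ext ?_ ?_))) rfl
  · exact show a.1 * b.1⁻¹ * (c.1 * b.1⁻¹)⁻¹ = a.1 * c.1⁻¹ by group
  · exact (ClosedSubsets.smul_smul _ _ _).trans
      (congrArg (ClosedSubsets.smul · L) (inv_mul_cancel_right c.1 b.1))

theorem regularKernel_groupoidInvol (f : PatternGroupoid L₀ → ℂ) (a b : L.carrier) :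
    regularKernel hmem hL (groupoidInvol L₀ hmem f) a b =
      starRingEnd ℂ (regularKernel hmem hL f b a) := by
  refine congrArg (starRingEnd ℂ) (congrArg f (Subtype.ext (Prod.ext ?_ ?_)))
  · exact show (a.1 * b.1⁻¹)⁻¹ = b.1 * a.1⁻¹ by group
  · exact (ClosedSubsets.smul_smul _ _ _).trans (congrArg (ClosedSubsets.smul · L) (by group))

end RegularRepresentation

theorem leftRegularRep_mul_and_star_general (G : Type*) [Group G] [TopologicalSpace G]
    [IsTopologicalGroup G] [LocallyCompactSpace G] [T2Space G]
    (L₀ : ClosedSubsets G) (hsep : UniformlySeparated L₀.carrier)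
    (L : ClosedSubsets G) (hL : L ∈ transversal L₀)
    (hmem : ∀ L' ∈ transversal L₀, ∀ g ∈ L'.carrier,
      ClosedSubsets.smul g L' ∈ transversal L₀)
    (π : (PatternGroupoid L₀ → ℂ) →
      (lp (fun _ : ↥L.carrier => ℂ) 2 →L[ℂ] lp (fun _ : ↥L.carrier => ℂ) 2))
    (hπ : ∀ f : PatternGroupoid L₀ → ℂ, Continuous f → HasCompactSupport f →
      ∀ (φ : lp (fun _ : ↥L.carrier => ℂ) 2) (g' : ↥L.carrier),
        π f φ g' = ∑' g : ↥L.carrier,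
          f ⟨(g'.1 * (g.1)⁻¹, ClosedSubsets.smul g.1 L), hmem L hL g.1 g.2, ⟨g'.1, g'.2, rfl⟩⟩
            * φ g)
    (f₁ f₂ f : PatternGroupoid L₀ → ℂ)
    (h₁c : Continuous f₁) (h₁s : HasCompactSupport f₁)
    (h₂c : Continuous f₂) (h₂s : HasCompactSupport f₂)
    (hfc : Continuous f) (hfs : HasCompactSupport f) :
    π (groupoidConv L₀ hmem f₁ f₂) = (π f₁).comp (π f₂) ∧
    π (groupoidInvol L₀ hmem f) = ContinuousLinearMap.adjoint (π f) := by
  classical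
  have hπ_single : ∀ f, Continuous f → HasCompactSupport f → ∀ a b x,
      π f (lp.single 2 b x) a = regularKernel hmem hL f a b * x :=
    fun f hc hs => apply_single_of_forall_apply_eq_tsum (hπ f hc hs)
  refine ⟨lp.ext_continuousLinearMap_single (by simp) fun b x => lp.ext (funext fun a => ?_),
    lp.ext_continuousLinearMap_single (by simp) fun b x => lp.ext (funext fun a => ?_)⟩
  · rw [ContinuousLinearMap.comp_apply,
      hπ_single _ (continuous_groupoidConv hmem hsep h₁c h₂c h₂s) (h₁s.groupoidConv hmem h₂s),
      regularKernel_groupoidConv, hπ f₁ h₁c h₁s, ← tsum_mul_right]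
    exact tsum_congr fun c => by rw [hπ_single f₂ h₂c h₂s, mul_assoc]; rfl
  · rw [hπ_single _ (continuous_groupoidInvol hmem hfc) (hfs.groupoidInvol hmem),
      regularKernel_groupoidInvol, adjoint_single_apply, hπ_single f hfc hfs, mul_one]

/-- The left regular representation `π_L` is multiplicative with respect to
the convolution product and sends the involution to the Hilbert-space adjoint: for continuous,
compactly supported `f₁, f₂, f : 𝒢_{L₀} → ℂ`, one has `π_L(f₁ ∗ f₂) = π_L(f₁) ∘ π_L(f₂)` and
`π_L(f*) = π_L(f)†` on `ℓ²(L)`.  (Here `π` is any assignment of bounded operators satisfying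
the defining formula of the left regular representation on continuous compactly supported
functions, and `hmem` records a true invariance fact needed to state the formulas.) -/
theorem leftRegularRep_mul_and_star (G : Type*) [Group G] [TopologicalSpace G]
    [IsTopologicalGroup G] [LocallyCompactSpace G] [SecondCountableTopology G] [T2Space G]
    (L₀ : ClosedSubsets G) (hsep : UniformlySeparated L₀.carrier)
    (L : ClosedSubsets G) (hL : L ∈ transversal L₀)
    (hmem : ∀ L' ∈ transversal L₀, ∀ g ∈ L'.carrier,
      ClosedSubsets.smul g L' ∈ transversal L₀)
    (π : (PatternGroupoid L₀ → ℂ) →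
      (lp (fun _ : ↥L.carrier => ℂ) 2 →L[ℂ] lp (fun _ : ↥L.carrier => ℂ) 2))
    (hπ : ∀ f : PatternGroupoid L₀ → ℂ, Continuous f → HasCompactSupport f →
      ∀ (φ : lp (fun _ : ↥L.carrier => ℂ) 2) (g' : ↥L.carrier),
        π f φ g' = ∑' g : ↥L.carrier,
          f ⟨(g'.1 * (g.1)⁻¹, ClosedSubsets.smul g.1 L), hmem L hL g.1 g.2, ⟨g'.1, g'.2, rfl⟩⟩
            * φ g)
    (f₁ f₂ f : PatternGroupoid L₀ → ℂ)
    (h₁c : Continuous f₁) (h₁s : HasCompactSupport f₁)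
    (h₂c : Continuous f₂) (h₂s : HasCompactSupport f₂)
    (hfc : Continuous f) (hfs : HasCompactSupport f) :
    π (groupoidConv L₀ hmem f₁ f₂) = (π f₁).comp (π f₂) ∧
    π (groupoidInvol L₀ hmem f) = ContinuousLinearMap.adjoint (π f) :=
  leftRegularRep_mul_and_star_general G L₀ hsep L hL hmem π hπ f₁ f₂ f h₁c h₁s h₂c h₂s hfc hfs
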